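/- Let d ≥ 1 and let q : ℝ^d × ℝ^d → ℂ (with Re q ≥ 0) be such that S(ξ) := sup_{x∈ℝ^d} |q(x,ξ)| and I(ξ) := inf_{x∈ℝ^d} Re q(x,ξ) are Borel measurable. Define the Pruitt indices β := sup{α ≥ 0 : lim_{|ξ|→0} S(ξ)/|ξ|^α = 0} and δ := sup{α ≥ 0 : lim_{|ξ|→0} I(ξ)/|ξ|^α = 0}. Then: (i) if d = 1 and β > 1, then ∫_{{|ξ|<r}} dξ / S(ξ) = ∞ for every r > 0; (ii) if ∫_{{|ξ|<r}} dξ / I(ξ) < ∞ for some r > 0, then for every α ≥ d it is not the case that lim_{|ξ|→0} I(ξ)/|ξ|^α = 0; in particular δ ≤ d. -/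

import Mathlib

/-!
If `f ξ / ‖ξ‖ ^ α → 0` as `ξ → 0`, then `f ξ ≤ ‖ξ‖ ^ α` on a punctured ball, so there
`∫ 1 / f ≥ ∫ ‖ξ‖ ^ (-α)`; in polar coordinates the latter is `∫₀^ρ t ^ (d - 1 - α) dt`, which
diverges as soon as `α ≥ d`. An index above `d` supplies such an `α`, and a finite integral of
`1 / f` rules out every such `α`.
-/

open MeasureTheory Filter Topology Set Metric Module
open scoped ENNReal

section PruittIndex

variable {E : Type*} [NormedAddCommGroup E]

noncomputable def pruittIndex (f : E → ℝ≥0∞) : ℝ≥0∞ :=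
  ⨆ (α : ℝ) (_ : 0 ≤ α) (_ : Tendsto (fun ξ => f ξ / ENNReal.ofReal (‖ξ‖ ^ α)) (𝓝[≠] 0) (𝓝 0)),
    ENNReal.ofReal α

theorem exists_tendsto_of_lt_pruittIndex {f : E → ℝ≥0∞} {c : ℝ≥0∞} (h : c < pruittIndex f) :
    ∃ α : ℝ, c < ENNReal.ofReal α ∧
      Tendsto (fun ξ => f ξ / ENNReal.ofReal (‖ξ‖ ^ α)) (𝓝[≠] 0) (𝓝 0) := by
  simp only [pruittIndex, lt_iSup_iff] at h
  obtain ⟨α, -, hf, hc⟩ := h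
  exact ⟨α, hc, hf⟩

theorem pruittIndex_le_of_forall_not_tendsto {f : E → ℝ≥0∞} {c : ℝ}
    (h : ∀ α, c < α → ¬Tendsto (fun ξ => f ξ / ENNReal.ofReal (‖ξ‖ ^ α)) (𝓝[≠] 0) (𝓝 0)) :
    pruittIndex f ≤ ENNReal.ofReal c :=
  iSup₂_le fun α _ => iSup_le fun hf => ENNReal.ofReal_le_ofReal (not_lt.1 fun hc => h α hc hf)

end PruittIndex

section Haar

variable {E : Type*} [NormedAddCommGroup E] [NormedSpace ℝ E] [FiniteDimensional ℝ E]
  [Nontrivial E] [MeasurableSpace E] [BorelSpace E] (μ : Measure E) [μ.IsAddHaarMeasure]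

theorem integrableOn_ball_norm_rpow_neg_iff {r α : ℝ} (hr : 0 < r) :
    IntegrableOn (fun x : E => ‖x‖ ^ (-α)) (ball 0 r) μ ↔ α < finrank ℝ E := by
  have hpow : EqOn (fun y : ℝ => y ^ (finrank ℝ E - 1) • y ^ (-α))
      (fun y => y ^ ((finrank ℝ E : ℝ) - 1 - α)) (Ioo 0 r) := fun y hy => by
    simp only [smul_eq_mul]
    rw [← Real.rpow_natCast, ← Real.rpow_add hy.1,
      Nat.cast_sub finrank_pos, Nat.cast_one, sub_eq_add_neg _ α]
  rw [integrableOn_fun_norm_addHaar μ (f := fun y => y ^ (-α)),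
    integrableOn_congr_fun hpow measurableSet_Ioo, intervalIntegral.integrableOn_Ioo_rpow_iff hr]
  constructor <;> intro <;> linarith

theorem lintegral_ball_inv_norm_rpow_eq_top {r α : ℝ} (hr : 0 < r) (hα : finrank ℝ E ≤ α) :
    ∫⁻ x in ball 0 r, (ENNReal.ofReal (‖x‖ ^ α))⁻¹ ∂μ = ∞ := by
  have hint := (integrableOn_ball_norm_rpow_neg_iff μ (α := α) hr).not.2 hα.not_gt
  have hfin : ¬ ∫⁻ x in ball 0 r, ENNReal.ofReal (‖x‖ ^ (-α)) ∂μ < ∞ := fun h =>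
    hint ⟨(measurable_norm.pow_const _).aestronglyMeasurable,
      (hasFiniteIntegral_iff_ofReal (.of_forall fun x => by positivity)).2 h⟩
  refine top_le_iff.1 (not_lt.1 hfin |>.trans (lintegral_mono fun x => ?_))
  rw [Real.rpow_neg (norm_nonneg x)]
  exact ENNReal.ofReal_inv_le

theorem lintegral_ball_inv_eq_top_of_tendsto {f : E → ℝ≥0∞} {α r : ℝ} (hα : finrank ℝ E ≤ α)
    (hf : Tendsto (fun ξ => f ξ / ENNReal.ofReal (‖ξ‖ ^ α)) (𝓝[≠] 0) (𝓝 0)) (hr : 0 < r) :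
    ∫⁻ ξ in ball 0 r, (f ξ)⁻¹ ∂μ = ∞ := by
  obtain ⟨ε, hε, hsmall⟩ := Metric.mem_nhdsWithin_iff.1 (hf.eventually_lt_const zero_lt_one)
  set ρ := min r ε
  have hle : ∀ᵐ ξ ∂μ.restrict (ball 0 ρ), (ENNReal.ofReal (‖ξ‖ ^ α))⁻¹ ≤ (f ξ)⁻¹ := by
    filter_upwards [ae_restrict_mem measurableSet_ball, ae_restrict_of_ae (μ.ae_ne 0)]
      with ξ hξρ hξ0
    have hlt : f ξ / ENNReal.ofReal (‖ξ‖ ^ α) < 1 :=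
      hsmall ⟨ball_subset_ball (min_le_right r ε) hξρ, hξ0⟩
    have hpos : ENNReal.ofReal (‖ξ‖ ^ α) ≠ 0 := by
      simpa using Real.rpow_pos_of_pos (norm_pos_iff.2 hξ0) α
    rw [ENNReal.div_lt_iff (.inl hpos) (.inl ENNReal.ofReal_ne_top), one_mul] at hlt
    exact ENNReal.inv_le_inv.2 hlt.le
  refine top_le_iff.1 ?_
  calc ∞ = ∫⁻ ξ in ball 0 ρ, (ENNReal.ofReal (‖ξ‖ ^ α))⁻¹ ∂μ :=
        (lintegral_ball_inv_norm_rpow_eq_top μ (lt_min hr hε) hα).symm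
    _ ≤ ∫⁻ ξ in ball 0 ρ, (f ξ)⁻¹ ∂μ := lintegral_mono_ae hle
    _ ≤ ∫⁻ ξ in ball 0 r, (f ξ)⁻¹ ∂μ := lintegral_mono_set (ball_subset_ball (min_le_left r ε))

theorem lintegral_ball_inv_eq_top_of_finrank_lt_pruittIndex {f : E → ℝ≥0∞} {r : ℝ}
    (hf : finrank ℝ E < pruittIndex f) (hr : 0 < r) :
    ∫⁻ ξ in ball 0 r, (f ξ)⁻¹ ∂μ = ∞ := by
  obtain ⟨α, hα, hf⟩ := exists_tendsto_of_lt_pruittIndex hf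
  rw [← ENNReal.ofReal_natCast, ENNReal.ofReal_lt_ofReal_iff'] at hα
  exact lintegral_ball_inv_eq_top_of_tendsto μ hα.1.le hf hr

end Haar

theorem stmt5 (d : ℕ) (hd : 1 ≤ d)
    (q : EuclideanSpace ℝ (Fin d) → EuclideanSpace ℝ (Fin d) → ℂ)
    (β δ : ℝ≥0∞)
    (hβ : β = ⨆ (α : ℝ) (_ : 0 ≤ α)
      (_ : Tendsto
        (fun ξ => (⨆ x, ENNReal.ofReal (‖q x ξ‖)) / ENNReal.ofReal (‖ξ‖ ^ α))
        (𝓝[≠] (0 : EuclideanSpace ℝ (Fin d))) (𝓝 0)), ENNReal.ofReal α)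
    (hδ : δ = ⨆ (α : ℝ) (_ : 0 ≤ α)
      (_ : Tendsto
        (fun ξ => (⨅ x, ENNReal.ofReal ((q x ξ).re)) / ENNReal.ofReal (‖ξ‖ ^ α))
        (𝓝[≠] (0 : EuclideanSpace ℝ (Fin d))) (𝓝 0)), ENNReal.ofReal α) :
    -- (i)
    ((d = 1) → (1 : ℝ≥0∞) < β →
      ∀ r > (0 : ℝ), ∫⁻ ξ in Metric.ball (0 : EuclideanSpace ℝ (Fin d)) r,
        (⨆ x, ENNReal.ofReal (‖q x ξ‖))⁻¹ = ∞) ∧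
    -- (ii)
    ((∃ r > (0 : ℝ), ∫⁻ ξ in Metric.ball (0 : EuclideanSpace ℝ (Fin d)) r,
        (⨅ x, ENNReal.ofReal ((q x ξ).re))⁻¹ < ∞) →
      (∀ α : ℝ, (d : ℝ) ≤ α →
        ¬ Tendsto
          (fun ξ => (⨅ x, ENNReal.ofReal ((q x ξ).re)) / ENNReal.ofReal (‖ξ‖ ^ α))
          (𝓝[≠] (0 : EuclideanSpace ℝ (Fin d))) (𝓝 0)) ∧
      δ ≤ (d : ℝ≥0∞)) := by
  constructor
  · rintro rfl hβ1 r hr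
    rw [hβ] at hβ1
    exact lintegral_ball_inv_eq_top_of_finrank_lt_pruittIndex volume
      (by rwa [finrank_euclideanSpace_fin, Nat.cast_one]) hr
  · rintro ⟨r, hr, hfin⟩
    have : Nonempty (Fin d) := ⟨⟨0, hd⟩⟩
    have hnot : ∀ α : ℝ, (d : ℝ) ≤ α →
        ¬ Tendsto
          (fun ξ => (⨅ x, ENNReal.ofReal ((q x ξ).re)) / ENNReal.ofReal (‖ξ‖ ^ α))
          (𝓝[≠] (0 : EuclideanSpace ℝ (Fin d))) (𝓝 0) := fun α hα hI =>
      hfin.ne (lintegral_ball_inv_eq_top_of_tendsto volume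
        (by rwa [finrank_euclideanSpace_fin]) hI hr)
    refine ⟨hnot, ?_⟩
    rw [hδ, ← ENNReal.ofReal_natCast]
    exact pruittIndex_le_of_forall_not_tendsto fun α hα => hnot α hα.le
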